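/- arXiv:2104.01007 — 2 statements merged into one kernel-verified Lean document; each statement's English description precedes it below -/
import Mathlib

section
/- (Lemma 2) Let G = (V,E) be a finite simple graph with list assignment L with κ colors, and let j ∈ {2,...,κ}. Then G is list-colorable with respect to the lists L^j(v), v ∈ V, if and only if there exists an inclusion-maximal independent set I of G such that, setting I^{(j)} = {v ∈ I : j ∈ L(v)}, either I^{(j)} = V, or the induced subgraph G[V \ I^{(j)}] is list-colorable with respect to the lists L^{j-1}(v), v ∈ V \ I^{(j)}. -/
/-- `S` is an independent set of the graph `G` (no two of its vertices are adjacent). -/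
def IsIndepIn {V : Type*} (G : SimpleGraph V) (S : Finset V) : Prop :=
  ∀ v ∈ S, ∀ w ∈ S, ¬ G.Adj v w

/-- `S` is an inclusion-maximal independent set of the induced subgraph `G[W]`:
it is an independent subset of `W` contained in no strictly larger independent
subset of `W`. -/
def IsMaxIndepIn {V : Type*} (G : SimpleGraph V) (W S : Finset V) : Prop :=
  S ⊆ W ∧ IsIndepIn G S ∧ ∀ T : Finset V, T ⊆ W → IsIndepIn G T → S ⊆ T → T = S

/-- The induced subgraph `G[W]` admits a proper list-coloring with respect to
the lists `L v`, `v ∈ W`. -/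
def ListColorableOn {V : Type*} (G : SimpleGraph V) (L : V → Finset ℕ) (W : Finset V) : Prop :=
  ∃ f : V → ℕ, (∀ v ∈ W, f v ∈ L v) ∧ ∀ v ∈ W, ∀ w ∈ W, G.Adj v w → f v ≠ f w

/-- Any independent set extends to an inclusion-maximal independent set. -/
lemma exists_max_indep_ext {V : Type*} [Fintype V] [DecidableEq V] (G : SimpleGraph V)
    (S : Finset V) (hS : IsIndepIn G S) :
    ∃ I : Finset V, S ⊆ I ∧ IsMaxIndepIn G Finset.univ I := by
  classical
  set 𝒞 : Finset (Finset V) :=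
    Finset.univ.powerset.filter (fun T => IsIndepIn G T ∧ S ⊆ T) with h𝒞
  have hSmem : S ∈ 𝒞 := by
    simp [h𝒞, hS]
  obtain ⟨I, hI, hmax⟩ := 𝒞.exists_max_image Finset.card ⟨S, hSmem⟩
  simp only [h𝒞, Finset.mem_filter, Finset.mem_powerset] at hI
  refine ⟨I, hI.2.2, Finset.subset_univ I, hI.2.1, ?_⟩
  intro T _ hTind hIT
  have hT : T ∈ 𝒞 := by
    simp only [h𝒞, Finset.mem_filter, Finset.mem_powerset]
    exact ⟨Finset.subset_univ T, hTind, hI.2.2.trans hIT⟩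
  exact (Finset.eq_of_subset_of_card_le hIT (hmax T hT)).symm

/-- Lemma 2: `G` is list-colorable with respect to the truncated lists
`Lʲ v = L v ∩ [1,j]` iff there is an inclusion-maximal independent set `I` of
`G` such that, for `I⁽ʲ⁾ = {v ∈ I : j ∈ L v}`, either `I⁽ʲ⁾ = V` or
`G[V \ I⁽ʲ⁾]` is list-colorable with respect to the lists `Lʲ⁻¹`. -/
theorem stmt3 {V : Type*} [Fintype V] [DecidableEq V] (G : SimpleGraph V)
    (κ : ℕ) (L : V → Finset ℕ) (hL : ∀ v, L v ⊆ Finset.Icc 1 κ)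
    (j : ℕ) (hj : j ∈ Finset.Icc 2 κ) :
    ListColorableOn G (fun v => L v ∩ Finset.Icc 1 j) Finset.univ ↔
      ∃ I : Finset V, IsMaxIndepIn G Finset.univ I ∧
        (I.filter (fun v => j ∈ L v) = Finset.univ ∨
          ListColorableOn G (fun v => L v ∩ Finset.Icc 1 (j - 1))
            (Finset.univ \ I.filter (fun v => j ∈ L v))) := by
  classical
  obtain ⟨hj2, hjκ⟩ := Finset.mem_Icc.mp hj
  constructor
  · rintro ⟨f, hfL, hfp⟩
    set S : Finset V := Finset.univ.filter (fun v => f v = j) with hSdef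
    have hSind : IsIndepIn G S := by
      intro v hv w hw hadj
      simp only [hSdef, Finset.mem_filter] at hv hw
      exact hfp v (Finset.mem_univ v) w (Finset.mem_univ w) hadj (hv.2.trans hw.2.symm)
    obtain ⟨I, hSI, hImax⟩ := exists_max_indep_ext G S hSind
    refine ⟨I, hImax, Or.inr ⟨f, ?_, ?_⟩⟩
    · intro v hv
      simp only [Finset.mem_sdiff, Finset.mem_filter] at hv
      have hfv := hfL v (Finset.mem_univ v)
      simp only [Finset.mem_inter, Finset.mem_Icc] at hfv
      have hfvj : f v ≠ j := by
        intro h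
        have hvS : v ∈ S := by simp [hSdef, h]
        exact hv.2 ⟨hSI hvS, by rw [← h]; exact hfv.1⟩
      simp only [Finset.mem_inter, Finset.mem_Icc]
      exact ⟨hfv.1, hfv.2.1, Nat.le_sub_one_of_lt (lt_of_le_of_ne hfv.2.2 hfvj)⟩
    · intro v _ w _ hadj
      exact hfp v (Finset.mem_univ v) w (Finset.mem_univ w) hadj
  · rintro ⟨I, ⟨_, hIind, _⟩, hcase⟩
    set Ij : Finset V := I.filter (fun v => j ∈ L v) with hIj
    have hIjind : ∀ v ∈ Ij, ∀ w ∈ Ij, ¬ G.Adj v w := by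
      intro v hv w hw
      exact hIind v (Finset.mem_of_mem_filter v hv) w (Finset.mem_of_mem_filter w hw)
    rcases hcase with hall | ⟨g, hgL, hgp⟩
    · refine ⟨fun _ => j, ?_, ?_⟩
      · intro v _
        have hv : v ∈ Ij := hall ▸ Finset.mem_univ v
        simp only [hIj, Finset.mem_filter] at hv
        simp only [Finset.mem_inter, Finset.mem_Icc]
        exact ⟨hv.2, by omega, le_refl j⟩
      · intro v _ w _ hadj _
        exact hIjind v (hall ▸ Finset.mem_univ v) w (hall ▸ Finset.mem_univ w) hadj
    · refine ⟨fun v => if v ∈ Ij then j else g v, ?_, ?_⟩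
      · intro v _
        by_cases hv : v ∈ Ij
        · simp only [hv, if_pos, Finset.mem_inter, Finset.mem_Icc]
          simp only [hIj, Finset.mem_filter] at hv
          exact ⟨hv.2, by omega, le_refl j⟩
        · simp only [hv, if_neg, if_false]
          have := hgL v (by simp [Finset.mem_sdiff, hv])
          simp only [Finset.mem_inter, Finset.mem_Icc] at this ⊢
          exact ⟨this.1, this.2.1, this.2.2.trans (Nat.sub_le j 1)⟩
      · intro v _ w _ hadj
        by_cases hv : v ∈ Ij <;> by_cases hw : w ∈ Ij <;>
          simp only [hv, hw, if_pos, if_neg, if_true, if_false]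
        · exact absurd hadj (hIjind v hv w hw)
        · have := hgL w (by simp [Finset.mem_sdiff, hw])
          simp only [Finset.mem_inter, Finset.mem_Icc] at this
          omega
        · have := hgL v (by simp [Finset.mem_sdiff, hv])
          simp only [Finset.mem_inter, Finset.mem_Icc] at this
          omega
        · exact hgp v (by simp [Finset.mem_sdiff, hv]) w (by simp [Finset.mem_sdiff, hw]) hadj
end

section
/- The real number t = 1.41422 fits every finite simple triangle-free graph G; that is, for every finite simple graph G = (V,E) containing no triangle and every m-element subset M ⊆ V, the induced subgraph G[M] has at most 1.41422^m inclusion-maximal independent sets. (This follows since every triangle-free graph on m vertices has at most 2^{m/2} inclusion-maximal independent sets and 1.41422^2 > 2.) -/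
/-- The number of inclusion-maximal independent sets of the induced subgraph `G[W]`. -/
noncomputable def numMaxIndep {V : Type*} (G : SimpleGraph V) (W : Finset V) : ℕ :=
  {S : Finset V | IsMaxIndepIn G W S}.ncard

/-!
Branch on a vertex `v` of `G[M]`. Removing a set `A` from a maximal independent set containing it
leaves a maximal independent set of `G[M]` minus the closed neighbourhood of `A`, and one avoiding
`v` is maximal in `G[M - v]`. So with `f m` the largest count over `m`-vertex sets: a vertex of
degree `≥ 3` gives `f m ≤ f (m - 4) + f (m - 1)`; degree `0` gives `f (m - 1)`, degree `1` (with
neighbour `u`, every set contains `v` or `u`) gives `2 f (m - 2)`. If every degree is `2`, take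
neighbours `u, w` of `v` and the other neighbour `x` of `u`: every maximal independent set contains
`v`, or `u`, or both `w` and `x`, and triangle-freeness makes `v, u, w, x` distinct, so
`f m ≤ 2 f (m - 3) + f (m - 4)`. Each recursion is satisfied by `√2 ^ m`.
-/

open Finset Real

section

variable {V : Type*} {G : SimpleGraph V} {M S T A : Finset V} {v : V}

lemma IsIndepIn.mono (h : IsIndepIn G S) (hTS : T ⊆ S) : IsIndepIn G T :=
  fun a ha b hb => h a (hTS ha) b (hTS hb)

lemma IsIndepIn.union [DecidableEq V] (hS : IsIndepIn G S) (hT : IsIndepIn G T)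
    (hST : ∀ a ∈ S, ∀ b ∈ T, ¬G.Adj a b) : IsIndepIn G (S ∪ T) := by
  intro a ha b hb hab
  rcases mem_union.1 ha with ha | ha <;> rcases mem_union.1 hb with hb | hb
  · exact hS a ha b hb hab
  · exact hST a ha b hb hab
  · exact hST b hb a ha hab.symm
  · exact hT a ha b hb hab

lemma isIndepIn_singleton : IsIndepIn G {v} := by
  simp [IsIndepIn]

lemma IsMaxIndepIn.exists_adj (hS : IsMaxIndepIn G M S) (hv : v ∈ M) (hvS : v ∉ S) :
    ∃ u ∈ S, G.Adj v u := by
  classical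
  by_contra! h
  obtain ⟨hSM, hSi, hSmax⟩ := hS
  have hind : IsIndepIn G ({v} ∪ S) := isIndepIn_singleton.union hSi (by simpa using h)
  have hvS' := hSmax _ (union_subset (singleton_subset_iff.2 hv) hSM) hind subset_union_right
  exact hvS (hvS' ▸ mem_union_left _ (mem_singleton_self v))

lemma IsMaxIndepIn.erase_of_notMem [DecidableEq V] (hS : IsMaxIndepIn G M S) (hvS : v ∉ S) :
    IsMaxIndepIn G (M.erase v) S := by
  obtain ⟨hSM, hSi, hSmax⟩ := hS
  exact ⟨fun a ha => mem_erase.2 ⟨fun h => hvS (h ▸ ha), hSM ha⟩, hSi,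
    fun T hT => hSmax T (hT.trans (erase_subset _ _))⟩

def removeClosedNbhd (G : SimpleGraph V) [DecidableEq V] [DecidableRel G.Adj] (M A : Finset V) :
    Finset V :=
  {w ∈ M | w ∉ A ∧ ∀ a ∈ A, ¬G.Adj a w}

lemma IsMaxIndepIn.sdiff [DecidableEq V] [DecidableRel G.Adj] (hS : IsMaxIndepIn G M S)
    (hA : A ⊆ S) : IsMaxIndepIn G (removeClosedNbhd G M A) (S \ A) := by
  obtain ⟨hSM, hSi, hSmax⟩ := hS
  refine ⟨fun s hs => ?_, hSi.mono sdiff_subset, fun T hTW hTi hST => ?_⟩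
  · obtain ⟨hsS, hsA⟩ := mem_sdiff.1 hs
    exact mem_filter.2 ⟨hSM hsS, hsA, fun a ha hadj => hSi a (hA ha) s hsS hadj⟩
  have hTA : ∀ t ∈ T, t ∉ A ∧ ∀ a ∈ A, ¬G.Adj a t := fun t ht => (mem_filter.1 (hTW ht)).2
  have hTM : T ⊆ M := hTW.trans (filter_subset _ _)
  have hind : IsIndepIn G (T ∪ A) :=
    hTi.union (hSi.mono hA) fun t ht a ha hta => (hTA t ht).2 a ha hta.symm
  have hS_sub : S ⊆ T ∪ A := fun s hs => by
    by_cases hsA : s ∈ A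
    · exact mem_union_right _ hsA
    · exact mem_union_left _ (hST (mem_sdiff.2 ⟨hs, hsA⟩))
  rw [← hSmax _ (union_subset hTM (hA.trans hSM)) hind hS_sub, union_sdiff_right,
    sdiff_eq_self_of_disjoint (disjoint_left.2 fun t ht => (hTA t ht).1)]

lemma setOf_isMaxIndepIn_finite (G : SimpleGraph V) (M : Finset V) :
    {S | IsMaxIndepIn G M S}.Finite :=
  M.powerset.finite_toSet.subset fun _ hS => mem_powerset.2 hS.1

lemma numMaxIndep_empty : numMaxIndep G ∅ = 1 := by
  refine Set.ncard_eq_one.2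
    ⟨∅, Set.eq_singleton_iff_unique_mem.2 ⟨?_, fun S hS => subset_empty.1 hS.1⟩⟩
  exact ⟨subset_refl _, by simp [IsIndepIn], fun T hT _ _ => subset_empty.1 hT⟩

lemma ncard_maxIndep_le_add {P Q R : Finset V → Prop}
    (h : ∀ S, IsMaxIndepIn G M S → P S → Q S ∨ R S) :
    {S | IsMaxIndepIn G M S ∧ P S}.ncard ≤
      {S | IsMaxIndepIn G M S ∧ Q S}.ncard + {S | IsMaxIndepIn G M S ∧ R S}.ncard := by
  have hfin := setOf_isMaxIndepIn_finite G M
  refine (Set.ncard_le_ncard ?_ ((hfin.subset fun _ hS => hS.1).union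
    (hfin.subset fun _ hS => hS.1))).trans (Set.ncard_union_le _ _)
  rintro S ⟨hS, hP⟩
  exact (h S hS hP).imp (⟨hS, ·⟩) (⟨hS, ·⟩)

lemma numMaxIndep_le_add {Q R : Finset V → Prop} (h : ∀ S, IsMaxIndepIn G M S → Q S ∨ R S) :
    numMaxIndep G M ≤
      {S | IsMaxIndepIn G M S ∧ Q S}.ncard + {S | IsMaxIndepIn G M S ∧ R S}.ncard := by
  simpa [numMaxIndep] using ncard_maxIndep_le_add (P := fun _ => True) fun S hS _ => h S hS

lemma ncard_maxIndep_superset_le_numMaxIndep [DecidableEq V] [DecidableRel G.Adj] :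
    {S | IsMaxIndepIn G M S ∧ A ⊆ S}.ncard ≤ numMaxIndep G (removeClosedNbhd G M A) := by
  refine Set.ncard_le_ncard_of_injOn (· \ A) (fun S hS => hS.1.sdiff hS.2) ?_
    (setOf_isMaxIndepIn_finite G _)
  rintro S₁ ⟨-, h₁⟩ S₂ ⟨-, h₂⟩ h
  rw [← sdiff_union_of_subset h₁, ← sdiff_union_of_subset h₂]
  exact congrArg (· ∪ A) h

end

lemma sqrt_two_pow_le_div {n m k : ℕ} (h : n + k ≤ m) : √2 ^ n ≤ √2 ^ m / √2 ^ k := by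
  rw [le_div_iff₀ (by positivity), ← pow_add]
  exact pow_le_pow_right₀ one_lt_sqrt_two.le h

lemma div_sqrt_two_pow_four_add_div_sqrt_two_le {T : ℝ} (hT : 0 ≤ T) :
    T / √2 ^ 4 + T / √2 ^ 1 ≤ T := by
  have hs : √2 ^ 2 = 2 := sq_sqrt zero_le_two
  have h4 : √2 ^ 4 = 4 := by rw [show 4 = 2 * 2 by rfl, pow_mul, hs]; norm_num
  rw [h4, pow_one, div_add_div _ _ (by norm_num) (by positivity), div_le_iff₀ (by positivity)]
  nlinarith [sqrt_nonneg 2]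

section Branching

variable {V : Type*} {G : SimpleGraph V} [DecidableEq V] {M A B : Finset V} {v : V} {k : ℕ}

lemma ncard_maxIndep_superset_le [DecidableRel G.Adj]
    (ih : ∀ W : Finset V, #W < #M → (numMaxIndep G W : ℝ) ≤ √2 ^ #W)
    (hB : B ⊆ M) (hBA : ∀ b ∈ B, b ∈ A ∨ ∃ a ∈ A, G.Adj a b)
    (hk : k ≤ #B) (hk0 : 0 < k) :
    ({S | IsMaxIndepIn G M S ∧ A ⊆ S}.ncard : ℝ) ≤ √2 ^ #M / √2 ^ k := by
  set W := removeClosedNbhd G M A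
  have hWB : Disjoint W B := disjoint_left.2 fun b hbW hbB => by
    obtain ⟨-, hbA, hbadj⟩ := mem_filter.1 hbW
    rcases hBA b hbB with h | ⟨a, ha, hab⟩
    exacts [hbA h, hbadj a ha hab]
  have hcard : #W + #B ≤ #M := by
    rw [← card_union_of_disjoint hWB]
    exact card_le_card (union_subset (filter_subset _ _) hB)
  calc ({S | IsMaxIndepIn G M S ∧ A ⊆ S}.ncard : ℝ)
      ≤ numMaxIndep G W := by exact_mod_cast ncard_maxIndep_superset_le_numMaxIndep
    _ ≤ √2 ^ #W := ih W (by omega)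
    _ ≤ √2 ^ #M / √2 ^ k := sqrt_two_pow_le_div (by omega)

lemma ncard_maxIndep_mem_le [DecidableRel G.Adj]
    (ih : ∀ W : Finset V, #W < #M → (numMaxIndep G W : ℝ) ≤ √2 ^ #W)
    (hv : v ∈ M) (hk : k ≤ #{w ∈ M | G.Adj v w} + 1) (hk0 : 0 < k) :
    ({S | IsMaxIndepIn G M S ∧ v ∈ S}.ncard : ℝ) ≤ √2 ^ #M / √2 ^ k := by
  simp_rw [← singleton_subset_iff]
  refine ncard_maxIndep_superset_le ih (B := insert v {w ∈ M | G.Adj v w})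
    (insert_subset hv (filter_subset _ _)) ?_ ?_ hk0
  · simp only [mem_insert, mem_filter, mem_singleton, exists_eq_left]
    tauto
  · rwa [card_insert_of_notMem (by simp)]

lemma ncard_maxIndep_notMem_le
    (ih : ∀ W : Finset V, #W < #M → (numMaxIndep G W : ℝ) ≤ √2 ^ #W)
    (hv : v ∈ M) :
    ({S | IsMaxIndepIn G M S ∧ v ∉ S}.ncard : ℝ) ≤ √2 ^ #M / √2 ^ 1 := by
  have hcard : #(M.erase v) + 1 = #M := card_erase_add_one hv
  calc ({S | IsMaxIndepIn G M S ∧ v ∉ S}.ncard : ℝ)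
      ≤ numMaxIndep G (M.erase v) := by
        exact_mod_cast Set.ncard_le_ncard_of_injOn id
          (fun S (hS : IsMaxIndepIn G M S ∧ v ∉ S) => hS.1.erase_of_notMem hS.2)
          (Set.injOn_id _) (setOf_isMaxIndepIn_finite G _)
    _ ≤ √2 ^ #(M.erase v) := ih _ (by omega)
    _ ≤ √2 ^ #M / √2 ^ 1 := sqrt_two_pow_le_div hcard.le

lemma numMaxIndep_le_of_degree_eq_zero [DecidableRel G.Adj]
    (ih : ∀ W : Finset V, #W < #M → (numMaxIndep G W : ℝ) ≤ √2 ^ #W)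
    (hv : v ∈ M) (h0 : #{w ∈ M | G.Adj v w} = 0) :
    (numMaxIndep G M : ℝ) ≤ √2 ^ #M := by
  have hmem : ∀ S, IsMaxIndepIn G M S → v ∈ S := fun S hS => by
    by_contra hvS
    obtain ⟨u, huS, hvu⟩ := hS.exists_adj hv hvS
    exact card_ne_zero_of_mem (mem_filter.2 ⟨hS.1 huS, hvu⟩) h0
  calc (numMaxIndep G M : ℝ)
      ≤ {S | IsMaxIndepIn G M S ∧ v ∈ S}.ncard := by
        exact_mod_cast Set.ncard_le_ncard (t := {S | IsMaxIndepIn G M S ∧ v ∈ S})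
          (fun S hS => ⟨hS, hmem S hS⟩) ((setOf_isMaxIndepIn_finite G M).subset fun _ h => h.1)
    _ ≤ √2 ^ #M / √2 ^ 1 := ncard_maxIndep_mem_le ih hv (by omega) one_pos
    _ ≤ √2 ^ #M := div_le_self (by positivity) (by simp [one_lt_sqrt_two.le])

lemma numMaxIndep_le_of_degree_eq_one [DecidableRel G.Adj]
    (ih : ∀ W : Finset V, #W < #M → (numMaxIndep G W : ℝ) ≤ √2 ^ #W)
    (hv : v ∈ M) (h1 : #{w ∈ M | G.Adj v w} = 1) :
    (numMaxIndep G M : ℝ) ≤ √2 ^ #M := by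
  obtain ⟨u, hu⟩ := card_eq_one.1 h1
  have huv : u ∈ M ∧ G.Adj v u := mem_filter.1 (hu ▸ mem_singleton_self u)
  have hsplit : ∀ S, IsMaxIndepIn G M S → v ∈ S ∨ u ∈ S := fun S hS => by
    refine or_iff_not_imp_left.2 fun hvS => ?_
    obtain ⟨s, hsS, hvs⟩ := hS.exists_adj hv hvS
    rwa [← mem_singleton.1 (hu ▸ mem_filter.2 ⟨hS.1 hsS, hvs⟩ : s ∈ ({u} : Finset V))]
  have hdeg_u : 0 < #{w ∈ M | G.Adj u w} := card_pos.2 ⟨v, mem_filter.2 ⟨hv, huv.2.symm⟩⟩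
  calc (numMaxIndep G M : ℝ)
      ≤ {S | IsMaxIndepIn G M S ∧ v ∈ S}.ncard + {S | IsMaxIndepIn G M S ∧ u ∈ S}.ncard := by
        exact_mod_cast numMaxIndep_le_add hsplit
    _ ≤ √2 ^ #M / √2 ^ 2 + √2 ^ #M / √2 ^ 2 :=
        add_le_add (ncard_maxIndep_mem_le ih hv (by omega) two_pos)
          (ncard_maxIndep_mem_le ih huv.1 (by omega) two_pos)
    _ = √2 ^ #M := by norm_num

lemma numMaxIndep_le_of_three_le_degree [DecidableRel G.Adj]
    (ih : ∀ W : Finset V, #W < #M → (numMaxIndep G W : ℝ) ≤ √2 ^ #W)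
    (hv : v ∈ M) (h3 : 3 ≤ #{w ∈ M | G.Adj v w}) :
    (numMaxIndep G M : ℝ) ≤ √2 ^ #M := by
  calc (numMaxIndep G M : ℝ)
      ≤ {S | IsMaxIndepIn G M S ∧ v ∈ S}.ncard + {S | IsMaxIndepIn G M S ∧ v ∉ S}.ncard := by
        exact_mod_cast numMaxIndep_le_add fun S _ => em (v ∈ S)
    _ ≤ √2 ^ #M / √2 ^ 4 + √2 ^ #M / √2 ^ 1 :=
        add_le_add (ncard_maxIndep_mem_le ih hv (by omega) four_pos)
          (ncard_maxIndep_notMem_le ih hv)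
    _ ≤ √2 ^ #M := div_sqrt_two_pow_four_add_div_sqrt_two_le (by positivity)

lemma numMaxIndep_le_of_forall_degree_eq_two [DecidableRel G.Adj] (hG : G.CliqueFree 3)
    (ih : ∀ W : Finset V, #W < #M → (numMaxIndep G W : ℝ) ≤ √2 ^ #W) (hM : M.Nonempty)
    (h2 : ∀ v ∈ M, #{w ∈ M | G.Adj v w} = 2) : (numMaxIndep G M : ℝ) ≤ √2 ^ #M := by
  obtain ⟨v, hv⟩ := hM
  obtain ⟨u, w, huw, hvN⟩ := card_eq_two.1 (h2 v hv)
  have hv_nbr : ∀ y ∈ M, G.Adj v y → y = u ∨ y = w := fun y hy hvy => by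
    simpa [hvN] using mem_filter.2 ⟨hy, hvy⟩
  obtain ⟨huM, hvu⟩ : u ∈ M ∧ G.Adj v u := mem_filter.1 (hvN ▸ mem_insert_self u {w})
  obtain ⟨hwM, hvw⟩ : w ∈ M ∧ G.Adj v w := mem_filter.1 (hvN ▸ by simp)
  have hv_uN : v ∈ {y ∈ M | G.Adj u y} := mem_filter.2 ⟨hv, hvu.symm⟩
  obtain ⟨x, hx⟩ := card_eq_one.1 (by rw [card_erase_of_mem hv_uN, h2 u huM])
  have hu_nbr : ∀ y ∈ M, G.Adj u y → y = v ∨ y = x := fun y hy huy =>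
    or_iff_not_imp_left.2 fun hyv =>
      mem_singleton.1 (hx ▸ mem_erase.2 ⟨hyv, mem_filter.2 ⟨hy, huy⟩⟩)
  obtain ⟨hxv, hxM, hux⟩ : x ≠ v ∧ x ∈ M ∧ G.Adj u x := by
    have hx_mem : x ∈ {y ∈ M | G.Adj u y}.erase v := hx ▸ mem_singleton_self x
    simpa using hx_mem
  have hwx : w ≠ x := by
    rintro rfl
    exact hG {v, u, w} (SimpleGraph.is3Clique_triple_iff.2 ⟨hvu, hvw, hux⟩)
  have hsplit : ∀ S, IsMaxIndepIn G M S → v ∉ S → u ∈ S ∨ {w, x} ⊆ S := fun S hS hvS =>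
    or_iff_not_imp_left.2 fun huS => by
      obtain ⟨a, haS, hva⟩ := hS.exists_adj hv hvS
      obtain ⟨b, hbS, hub⟩ := hS.exists_adj huM huS
      rcases hv_nbr a (hS.1 haS) hva with rfl | rfl
      · exact absurd haS huS
      rcases hu_nbr b (hS.1 hbS) hub with rfl | rfl
      · exact absurd hbS hvS
      exact insert_subset haS (singleton_subset_iff.2 hbS)
  have hcard : #({v, u, w, x} : Finset V) = 4 := by
    rw [card_insert_of_notMem, card_insert_of_notMem, card_pair hwx] <;>
      simp [hvu.ne, hvw.ne, hxv.symm, huw, hux.ne]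
  have h_wx : ({S | IsMaxIndepIn G M S ∧ {w, x} ⊆ S}.ncard : ℝ) ≤ √2 ^ #M / √2 ^ 4 := by
    refine ncard_maxIndep_superset_le ih (B := {v, u, w, x}) (by simp [insert_subset_iff, *])
      ?_ hcard.ge four_pos
    simp only [mem_insert, mem_singleton]
    rintro b (rfl | rfl | rfl | rfl)
    exacts [Or.inr ⟨w, by simp, hvw.symm⟩, Or.inr ⟨x, by simp, hux.symm⟩, by simp, by simp]
  calc (numMaxIndep G M : ℝ)
      ≤ {S | IsMaxIndepIn G M S ∧ v ∈ S}.ncard + {S | IsMaxIndepIn G M S ∧ v ∉ S}.ncard := by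
        exact_mod_cast numMaxIndep_le_add fun S _ => em (v ∈ S)
    _ ≤ {S | IsMaxIndepIn G M S ∧ v ∈ S}.ncard + ({S | IsMaxIndepIn G M S ∧ u ∈ S}.ncard +
          {S | IsMaxIndepIn G M S ∧ {w, x} ⊆ S}.ncard) := by
        gcongr
        exact_mod_cast ncard_maxIndep_le_add hsplit
    _ ≤ √2 ^ #M / √2 ^ 3 + (√2 ^ #M / √2 ^ 3 + √2 ^ #M / √2 ^ 4) := by
        gcongr
        · exact ncard_maxIndep_mem_le ih hv (by rw [h2 v hv]) three_pos
        · exact ncard_maxIndep_mem_le ih huM (by rw [h2 u huM]) three_pos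
    _ = √2 ^ #M / √2 ^ 4 + √2 ^ #M / √2 ^ 1 := by
        rw [show √2 ^ 3 = √2 ^ 2 * √2 by ring, sq_sqrt zero_le_two]
        ring
    _ ≤ √2 ^ #M := div_sqrt_two_pow_four_add_div_sqrt_two_le (by positivity)

end Branching

theorem numMaxIndep_le_sqrt_two_pow {V : Type*} {G : SimpleGraph V} (hG : G.CliqueFree 3)
    (M : Finset V) : (numMaxIndep G M : ℝ) ≤ √2 ^ #M := by
  classical
  induction hn : #M using Nat.strong_induction_on generalizing M with
  | _ n ih =>
  subst hn
  replace ih : ∀ W : Finset V, #W < #M → (numMaxIndep G W : ℝ) ≤ √2 ^ #W :=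
    fun W hW => ih _ hW W rfl
  rcases M.eq_empty_or_nonempty with rfl | hM
  · simp [numMaxIndep_empty]
  by_cases h : ∃ v ∈ M, #{w ∈ M | G.Adj v w} ≠ 2
  · obtain ⟨v, hv, hd⟩ := h
    rcases (by omega : #{w ∈ M | G.Adj v w} = 0 ∨ #{w ∈ M | G.Adj v w} = 1 ∨
      3 ≤ #{w ∈ M | G.Adj v w}) with h0 | h1 | h3
    · exact numMaxIndep_le_of_degree_eq_zero ih hv h0
    · exact numMaxIndep_le_of_degree_eq_one ih hv h1
    · exact numMaxIndep_le_of_three_le_degree ih hv h3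
  · push Not at h
    exact numMaxIndep_le_of_forall_degree_eq_two hG ih hM h

theorem stmt10_general {V : Type*} (G : SimpleGraph V)
    (hG : G.CliqueFree 3) (M : Finset V) :
    (numMaxIndep G M : ℝ) ≤ 1.41422 ^ M.card :=
  (numMaxIndep_le_sqrt_two_pow hG M).trans <|
    pow_le_pow_left₀ (sqrt_nonneg 2) ((sqrt_le_left (by norm_num)).2 (by norm_num)) _

/-- `t = 1.41422` fits every finite simple triangle-free graph: every induced
subgraph `G[M]` has at most `1.41422^{|M|}` inclusion-maximal independent sets. -/
theorem stmt10 {V : Type*} [Fintype V] [DecidableEq V] (G : SimpleGraph V)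
    (hG : G.CliqueFree 3) (M : Finset V) :
    (numMaxIndep G M : ℝ) ≤ 1.41422 ^ M.card :=
  stmt10_general G hG M
end
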